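/- arXiv:1707.05918 — 2 statements merged into one kernel-verified Lean document; each statement's English description precedes it below -/
import Mathlib

section
/- In the real quaternions, the product β̲·α̲ equals Q_L(0) − [q] + qΔω, i.e. β̲α̲ = (L(0) + L(1)i + L(2)j + L(3)k) − (1 − q + q² − q³) + qΔ(qi + pj − k). -/
/-! With `p = α + β`, `q = -αβ` and the Binet formula `L n = αⁿ + βⁿ`, both sides are quaternions
whose four coordinates are polynomials in `α` and `β`; the left side is computed from the Hamilton
product of the coordinate vectors `(1, β, β², β³)` and `(1, α, α², α³)`, and the coordinates agree
identically. -/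

open Quaternion

section StandardBasis

variable {R : Type*} [CommRing R] {i j k : ℍ[R]}

theorem Quaternion.smul_basis_mul_smul_basis
    (hi : i = ⟨0, 1, 0, 0⟩) (hj : j = ⟨0, 0, 1, 0⟩) (hk : k = ⟨0, 0, 0, 1⟩)
    (a₀ a₁ a₂ a₃ b₀ b₁ b₂ b₃ : R) :
    (a₀ • 1 + a₁ • i + a₂ • j + a₃ • k) * (b₀ • 1 + b₁ • i + b₂ • j + b₃ • k)
      = (a₀ * b₀ - a₁ * b₁ - a₂ * b₂ - a₃ * b₃) • 1 + (a₀ * b₁ + a₁ * b₀ + a₂ * b₃ - a₃ * b₂) • i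
        + (a₀ * b₂ - a₁ * b₃ + a₂ * b₀ + a₃ * b₁) • j + (a₀ * b₃ + a₁ * b₂ - a₂ * b₁ + a₃ * b₀) • k := by
  -- The literals do not elaborate in simp normal form, so read their coordinates off by `rfl`.
  obtain ⟨hi₀, hi₁, hi₂, hi₃⟩ : i.re = 0 ∧ i.imI = 1 ∧ i.imJ = 0 ∧ i.imK = 0 :=
    hi ▸ ⟨rfl, rfl, rfl, rfl⟩
  obtain ⟨hj₀, hj₁, hj₂, hj₃⟩ : j.re = 0 ∧ j.imI = 0 ∧ j.imJ = 1 ∧ j.imK = 0 :=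
    hj ▸ ⟨rfl, rfl, rfl, rfl⟩
  obtain ⟨hk₀, hk₁, hk₂, hk₃⟩ : k.re = 0 ∧ k.imI = 0 ∧ k.imJ = 0 ∧ k.imK = 1 :=
    hk ▸ ⟨rfl, rfl, rfl, rfl⟩
  ext <;> simp [hi₀, hi₁, hi₂, hi₃, hj₀, hj₁, hj₂, hj₃, hk₀, hk₁, hk₂, hk₃]

end StandardBasis

theorem add_eq_and_mul_eq_neg_of_quadratic_roots {p q α β : ℝ} (hpq : 0 ≤ p ^ 2 + 4 * q)
    (hα : α = (p + √(p ^ 2 + 4 * q)) / 2) (hβ : β = (p - √(p ^ 2 + 4 * q)) / 2) :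
    α + β = p ∧ α * β = -q := by
  have hsq := Real.sq_sqrt hpq
  subst hα hβ
  constructor
  · ring
  · linear_combination (-1 / 4 : ℝ) * hsq

theorem lucas_eq_pow_add_pow {α β : ℝ} {L : ℤ → ℝ} (hL0 : L 0 = 2) (hL1 : L 1 = α + β)
    (hL : ∀ n : ℤ, L (n + 2) = (α + β) * L (n + 1) - α * β * L n) (n : ℕ) :
    L n = α ^ n + β ^ n := by
  induction n using Nat.twoStepInduction with
  | zero => norm_num [hL0]
  | one => simpa using hL1
  | more n ih₀ ih₁ =>
    push_cast at ih₁ ⊢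
    rw [hL, ih₀, ih₁]
    ring

theorem stmt_1 (p q : ℝ) (hpq : 0 < p^2 + 4*q)
    (α β : ℝ)
    (hα : α = (p + Real.sqrt (p^2 + 4*q)) / 2)
    (hβ : β = (p - Real.sqrt (p^2 + 4*q)) / 2)
    (Δ : ℝ) (hΔ : Δ = α - β)
    (L : ℤ → ℝ) (hL0 : L 0 = 2) (hL1 : L 1 = p)
    (hL : ∀ n : ℤ, L (n+2) = p * L (n+1) + q * L n)
    (i j k : ℍ[ℝ])
    (hi : i = ⟨0,1,0,0⟩) (hj : j = ⟨0,0,1,0⟩) (hk : k = ⟨0,0,0,1⟩)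
    (QL : ℤ → ℍ[ℝ])
    (hQL : ∀ n : ℤ, QL n = ((L n : ℝ) : ℍ[ℝ]) + ((L (n+1) : ℝ) : ℍ[ℝ]) * i
      + ((L (n+2) : ℝ) : ℍ[ℝ]) * j + ((L (n+3) : ℝ) : ℍ[ℝ]) * k)
    (ω : ℍ[ℝ]) (hω : ω = ((q : ℝ) : ℍ[ℝ]) * i + ((p : ℝ) : ℍ[ℝ]) * j - k)
    (uα : ℍ[ℝ])
    (huα : uα = 1 + ((α : ℝ) : ℍ[ℝ]) * i + ((α^2 : ℝ) : ℍ[ℝ]) * j + ((α^3 : ℝ) : ℍ[ℝ]) * k)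
    (uβ : ℍ[ℝ])
    (huβ : uβ = 1 + ((β : ℝ) : ℍ[ℝ]) * i + ((β^2 : ℝ) : ℍ[ℝ]) * j + ((β^3 : ℝ) : ℍ[ℝ]) * k) :
    uβ * uα = QL 0 - ((1 - q + q^2 - q^3 : ℝ) : ℍ[ℝ]) + ((q * Δ : ℝ) : ℍ[ℝ]) * ω := by
  obtain ⟨rfl, hprod⟩ := add_eq_and_mul_eq_neg_of_quadratic_roots hpq.le hα hβ
  obtain rfl : q = -(α * β) := by linear_combination hprod
  subst hΔ
  have hLucas := lucas_eq_pow_add_pow hL0 hL1 (fun n ↦ by rw [hL]; ring)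
  have h₀ := hLucas 0; have h₁ := hLucas 1; have h₂ := hLucas 2; have h₃ := hLucas 3
  push_cast at h₀ h₁ h₂ h₃
  have hcoe (r : ℝ) : (r : ℍ[ℝ]) = r • 1 := Algebra.algebraMap_eq_smul_one r
  have hu (a : ℝ) : 1 + (a : ℍ[ℝ]) * i + ((a ^ 2 : ℝ) : ℍ[ℝ]) * j + ((a ^ 3 : ℝ) : ℍ[ℝ]) * k
      = (1 : ℝ) • 1 + a • i + a ^ 2 • j + a ^ 3 • k := by
    simp only [one_smul, coe_mul_eq_smul]
  rw [huβ, huα, hu, hu, Quaternion.smul_basis_mul_smul_basis hi hj hk, hQL, hω]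
  simp only [coe_mul_eq_smul]
  simp only [hcoe, zero_add, h₀, h₁, h₂, h₃]
  module
end

section
/- (Binet formula for (p,q)-Lucas quaternions) For every integer n (with q ≠ 0): Q_L(n) = α̲·α^n + β̲·β^n. -/
/-!
Both n ↦ L n and n ↦ αⁿ + βⁿ solve the recurrence x(n+2) = p x(n+1) + q x(n) and agree at 0 and 1;
since q ≠ 0 the recurrence can also be run backwards, so they agree on all of ℤ. The quaternion
identity is this Binet formula for L n, …, L (n+3), read off componentwise.
-/

open Quaternion

theorem eq_of_linearRecurrence_of_eq_zero_of_eq_one {K M : Type*} [Field K] [AddCommGroup M]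
    [Module K M] {p q : K} (hq : q ≠ 0) {f g : ℤ → M}
    (hf : ∀ n, f (n + 2) = p • f (n + 1) + q • f n)
    (hg : ∀ n, g (n + 2) = p • g (n + 1) + q • g n)
    (h0 : f 0 = g 0) (h1 : f 1 = g 1) : f = g := by
  have key : ∀ m : ℤ, f m = g m ∧ f (m + 1) = g (m + 1) := by
    intro m
    induction m using Int.induction_on with
    | zero => exact ⟨h0, by simpa using h1⟩
    | succ m ih =>
      refine ⟨ih.2, ?_⟩
      rw [add_assoc, one_add_one_eq_two, hf, hg, ih.1, ih.2]
    | pred m ih =>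
      refine ⟨?_, by simpa using ih.1⟩
      have hfm := hf (-m - 1)
      have hgm := hg (-m - 1)
      rw [show -(m : ℤ) - 1 + 2 = -m + 1 by ring, show -(m : ℤ) - 1 + 1 = -m by ring] at hfm hgm
      rw [ih.1, ih.2, hgm, add_right_inj] at hfm
      exact smul_right_injective M hq hfm.symm
  exact funext fun m => (key m).1

theorem zpow_add_two_eq_of_sq_eq {K : Type*} [Field K] {x p q : K} (hx : x ≠ 0)
    (h : x ^ 2 = p * x + q) (m : ℤ) : x ^ (m + 2) = p * x ^ (m + 1) + q * x ^ m := by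
  rw [zpow_add₀ hx, zpow_add_one₀ hx, zpow_two, ← pow_two, h]
  ring

theorem lucas_eq_zpow_add_zpow {K : Type*} [Field K] {p q α β : K} (hq : q ≠ 0)
    (hsum : α + β = p) (hprod : α * β = -q) {L : ℤ → K} (hL0 : L 0 = 2) (hL1 : L 1 = p)
    (hL : ∀ n, L (n + 2) = p * L (n + 1) + q * L n) (n : ℤ) : L n = α ^ n + β ^ n := by
  have hαβ : α * β ≠ 0 := hprod ▸ neg_ne_zero.mpr hq
  have hα2 : α ^ 2 = p * α + q := by rw [← hsum]; linear_combination -hprod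
  have hβ2 : β ^ 2 = p * β + q := by rw [← hsum]; linear_combination -hprod
  refine congrFun (eq_of_linearRecurrence_of_eq_zero_of_eq_one (g := fun m => α ^ m + β ^ m)
    hq hL (fun m => ?_) ?_ ?_) n
  · simp only [smul_eq_mul, zpow_add_two_eq_of_sq_eq (left_ne_zero_of_mul hαβ) hα2,
      zpow_add_two_eq_of_sq_eq (right_ne_zero_of_mul hαβ) hβ2]
    ring
  · norm_num [hL0]
  · simp [hL1, hsum]

theorem stmt_14 (p q : ℝ) (hpq : 0 < p^2 + 4*q)
    (hq : q ≠ 0)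
    (α β : ℝ)
    (hα : α = (p + Real.sqrt (p^2 + 4*q)) / 2)
    (hβ : β = (p - Real.sqrt (p^2 + 4*q)) / 2)
    (L : ℤ → ℝ) (hL0 : L 0 = 2) (hL1 : L 1 = p)
    (hL : ∀ n : ℤ, L (n+2) = p * L (n+1) + q * L n)
    (i j k : ℍ[ℝ])
    (hi : i = ⟨0,1,0,0⟩) (hj : j = ⟨0,0,1,0⟩) (hk : k = ⟨0,0,0,1⟩)
    (QL : ℤ → ℍ[ℝ])
    (hQL : ∀ n : ℤ, QL n = ((L n : ℝ) : ℍ[ℝ]) + ((L (n+1) : ℝ) : ℍ[ℝ]) * i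
      + ((L (n+2) : ℝ) : ℍ[ℝ]) * j + ((L (n+3) : ℝ) : ℍ[ℝ]) * k)
    (uα : ℍ[ℝ])
    (huα : uα = 1 + ((α : ℝ) : ℍ[ℝ]) * i + ((α^2 : ℝ) : ℍ[ℝ]) * j + ((α^3 : ℝ) : ℍ[ℝ]) * k)
    (uβ : ℍ[ℝ])
    (huβ : uβ = 1 + ((β : ℝ) : ℍ[ℝ]) * i + ((β^2 : ℝ) : ℍ[ℝ]) * j + ((β^3 : ℝ) : ℍ[ℝ]) * k)
    (n : ℤ) :
    QL n = uα * ((α^n : ℝ) : ℍ[ℝ]) + uβ * ((β^n : ℝ) : ℍ[ℝ]) := by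
  have hs : Real.sqrt (p ^ 2 + 4 * q) ^ 2 = p ^ 2 + 4 * q := Real.sq_sqrt hpq.le
  have hsum : α + β = p := by rw [hα, hβ]; ring
  have hprod : α * β = -q := by rw [hα, hβ]; linear_combination -hs / 4
  have hLn (m : ℕ) : L (n + m) = α ^ n * α ^ m + β ^ n * β ^ m := by
    have hαβ : α * β ≠ 0 := hprod ▸ neg_ne_zero.mpr hq
    rw [lucas_eq_zpow_add_zpow hq hsum hprod hL0 hL1 hL, zpow_add₀ (left_ne_zero_of_mul hαβ),
      zpow_add₀ (right_ne_zero_of_mul hαβ), zpow_natCast, zpow_natCast]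
  rw [hQL, Quaternion.mul_coe_eq_smul, Quaternion.mul_coe_eq_smul, huα, huβ]
  simp only [Quaternion.coe_mul_eq_smul]
  -- `i`, `j`, `k` are unfolded only after `simp` has split the products: the anonymous
  -- constructors are typed as `QuaternionAlgebra`, where the `Quaternion` simp lemmas do not fire.
  ext <;> simp <;> simp [hi, hj, hk]
  exacts [by simpa using hLn 0, by simpa using hLn 1, by simpa using hLn 2, by simpa using hLn 3]
end
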